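/- Fix p ∈ [1,∞) and metric spaces (X,d_X), (Y,d_Y). (i) If Ψ : (0,∞) → (0,∞) is an increasing function such that γ(A, d_X^p) ≤ Ψ(γ(A, d_Y^p)) for every n ∈ ℕ and every n×n symmetric stochastic matrix A, then γ₊(A, d_X^p) ≤ 2·Ψ(2^p·γ₊(A, d_Y^p)) for every n ∈ ℕ and every n×n symmetric stochastic matrix A. (ii) Conversely, if Φ : (0,∞) → (0,∞) is an increasing function such that γ₊(A, d_X^p) ≤ Φ(γ₊(A, d_Y^p)) for every n ∈ ℕ and every n×n symmetric stochastic matrix A, then γ(A, d_X^p) ≤ (1/2)·Φ(2^{2p+1}·γ(A, d_Y^p)) for every n ∈ ℕ and every n×n symmetric stochastic matrix A. -/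

import Mathlib

open scoped ENNReal

/-- An `n × n` real matrix is symmetric and stochastic. -/
def IsSymmStochastic {n : ℕ} (A : Matrix (Fin n) (Fin n) ℝ) : Prop :=
  (∀ i j, A i j = A j i) ∧ (∀ i j, 0 ≤ A i j) ∧ ∀ i, ∑ j, A i j = 1

/-- The nonlinear spectral gap quantity `γ(A, d_X^p)`. -/
noncomputable def gammaNL {n : ℕ} (A : Matrix (Fin n) (Fin n) ℝ)
    (X : Type*) [PseudoMetricSpace X] (p : ℝ) : ℝ≥0∞ :=
  sInf {g : ℝ≥0∞ | 0 < g ∧ ∀ x : Fin n → X,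
    ENNReal.ofReal ((∑ i, ∑ j, dist (x i) (x j) ^ p) / (n : ℝ) ^ 2) ≤
      g / (n : ℝ≥0∞) * ENNReal.ofReal (∑ i, ∑ j, A i j * dist (x i) (x j) ^ p)}

/-- The absolute nonlinear spectral gap quantity `γ₊(A, d_X^p)`. -/
noncomputable def gammaPlusNL {n : ℕ} (A : Matrix (Fin n) (Fin n) ℝ)
    (X : Type*) [PseudoMetricSpace X] (p : ℝ) : ℝ≥0∞ :=
  sInf {g : ℝ≥0∞ | 0 < g ∧ ∀ x y : Fin n → X,
    ENNReal.ofReal ((∑ i, ∑ j, dist (x i) (y j) ^ p) / (n : ℝ) ^ 2) ≤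
      g / (n : ℝ≥0∞) * ENNReal.ofReal (∑ i, ∑ j, A i j * dist (x i) (y j) ^ p)}

/-!
Both parts follow, by monotonicity of `Ψ` and `Φ`, from two pairs of comparisons.

γ₊(A) versus γ of the bipartite double cover `B = [[0, A], [A, 0]]`: a configuration on `B` is a
pair `(x, y)`, its `B`-energy is twice the `A`-energy between `x` and `y`, and its total variance
contains `2 ∑ d(x_i,y_j)^p`; conversely, the triangle inequality through an averaging index
bounds `∑ d(x_i,x_j)^p` by `2^p ∑ d(x_i,y_j)^p`. Hence `γ₊(A) ≤ 2 γ(B)` and `γ(B) ≤ 2^p γ₊(A)`.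

γ(A) versus γ₊ of the lazy walk `L = (A + I)/2`: taking `y = x` gives `γ(A) ≤ γ₊(L)/2`. For
`γ₊(L) ≤ 2^(2p+1) γ(A)`, the triangle inequality through `x_j` bounds `∑ d(x_i,y_j)^p` by the
γ(A)-inequality for `x` plus `n ∑ d(x_i,y_i)^p`; that diagonal term is absorbed because testing
the γ(A)-inequality on one point at `a` and all others at `b` forces `γ(A) ≥ 1/2` once `n ≥ 2`.
-/

open Finset

section DistSums

variable {n : ℕ} {X : Type*} [PseudoMetricSpace X] (p : ℝ)

noncomputable def distSum (x y : Fin n → X) : ℝ :=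
  ∑ i, ∑ j, dist (x i) (y j) ^ p

noncomputable def edgeDistSum (A : Matrix (Fin n) (Fin n) ℝ) (x y : Fin n → X) : ℝ :=
  ∑ i, ∑ j, A i j * dist (x i) (y j) ^ p

noncomputable def diagDistSum (x y : Fin n → X) : ℝ :=
  ∑ i, dist (x i) (y i) ^ p

variable {p}

lemma distSum_nonneg (x y : Fin n → X) : 0 ≤ distSum p x y := by
  unfold distSum; positivity

lemma diagDistSum_nonneg (x y : Fin n → X) : 0 ≤ diagDistSum p x y := by
  unfold diagDistSum; positivity

lemma edgeDistSum_nonneg {A : Matrix (Fin n) (Fin n) ℝ} (hA : ∀ i j, 0 ≤ A i j)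
    (x y : Fin n → X) : 0 ≤ edgeDistSum p A x y :=
  sum_nonneg fun i _ => sum_nonneg fun j _ => mul_nonneg (hA i j) (by positivity)

lemma distSum_comm (x y : Fin n → X) : distSum p x y = distSum p y x := by
  rw [distSum, sum_comm]
  simp only [dist_comm, distSum]

lemma edgeDistSum_comm {A : Matrix (Fin n) (Fin n) ℝ} (hA : ∀ i j, A i j = A j i)
    (x y : Fin n → X) : edgeDistSum p A x y = edgeDistSum p A y x := by
  rw [edgeDistSum, sum_comm]
  simp only [dist_comm, hA, edgeDistSum]

lemma diagDistSum_self (hp : p ≠ 0) (x : Fin n → X) : diagDistSum p x x = 0 := by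
  simp [diagDistSum, Real.zero_rpow hp]

end DistSums

lemma dist_rpow_le {X : Type*} [PseudoMetricSpace X] {p : ℝ} (hp : 1 ≤ p) (a b c : X) :
    dist a c ^ p ≤ 2 ^ (p - 1) * (dist a b ^ p + dist b c ^ p) := by
  have h := NNReal.rpow_add_le_mul_rpow_add_rpow (nndist a b) (nndist b c) hp
  calc dist a c ^ p ≤ (dist a b + dist b c) ^ p := by gcongr; exact dist_triangle a b c
    _ ≤ 2 ^ (p - 1) * (dist a b ^ p + dist b c ^ p) := by exact_mod_cast h

section Triangle

variable {n : ℕ} {X : Type*} [PseudoMetricSpace X] {p : ℝ}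

lemma two_rpow_sub_one_mul_two : (2 : ℝ) ^ (p - 1) * 2 = 2 ^ p := by
  rw [Real.rpow_sub_one two_ne_zero]; ring

lemma distSum_self_le (hp : 1 ≤ p) (hn : 0 < n) (x y : Fin n → X) :
    distSum p x x ≤ 2 ^ p * distSum p x y := by
  set r : Fin n → ℝ := fun i => ∑ k, dist (x i) (y k) ^ p
  have hpair : ∀ i j, n * dist (x i) (x j) ^ p ≤ 2 ^ (p - 1) * (r i + r j) := fun i j => by
    calc n * dist (x i) (x j) ^ p = ∑ k : Fin n, dist (x i) (x j) ^ p := by simp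
      _ ≤ ∑ k, 2 ^ (p - 1) * (dist (x i) (y k) ^ p + dist (x j) (y k) ^ p) := by
        gcongr with k
        simpa only [dist_comm (y k)] using dist_rpow_le hp (x i) (y k) (x j)
      _ = 2 ^ (p - 1) * (r i + r j) := by rw [← mul_sum, sum_add_distrib]
  have hsum : n * distSum p x x ≤ n * (2 ^ p * distSum p x y) := by
    calc n * distSum p x x ≤ ∑ i, ∑ j, 2 ^ (p - 1) * (r i + r j) := by
          rw [distSum, mul_sum]; simp only [mul_sum]
          exact sum_le_sum fun i _ => sum_le_sum fun j _ => hpair i j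
      _ = n * (2 ^ (p - 1) * 2 * distSum p x y) := by
          simp only [← mul_sum, sum_add_distrib, sum_const, card_univ, Fintype.card_fin,
            nsmul_eq_mul, distSum, r]
          ring
      _ = n * (2 ^ p * distSum p x y) := by rw [two_rpow_sub_one_mul_two]
  exact le_of_mul_le_mul_left hsum (by exact_mod_cast hn)

lemma distSum_le_two_rpow_mul (hp : 1 ≤ p) (x y : Fin n → X) :
    distSum p x y ≤ 2 ^ (p - 1) * (distSum p x x + n * diagDistSum p x y) := by
  calc distSum p x y ≤ ∑ i, ∑ j, 2 ^ (p - 1) * (dist (x i) (x j) ^ p + dist (x j) (y j) ^ p) := by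
        unfold distSum; gcongr with i _ j; exact dist_rpow_le hp _ _ _
    _ = 2 ^ (p - 1) * (distSum p x x + n * diagDistSum p x y) := by
        simp only [← mul_sum, sum_add_distrib, sum_const, card_univ, Fintype.card_fin,
          nsmul_eq_mul, distSum, diagDistSum]

end Triangle

namespace IsSymmStochastic

variable {n : ℕ} {A : Matrix (Fin n) (Fin n) ℝ}

lemma symm (hA : IsSymmStochastic A) (i j : Fin n) : A i j = A j i := hA.1 i j

lemma nonneg (hA : IsSymmStochastic A) (i j : Fin n) : 0 ≤ A i j := hA.2.1 i j

lemma sum_row (hA : IsSymmStochastic A) (i : Fin n) : ∑ j, A i j = 1 := hA.2.2 i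

lemma sum_col (hA : IsSymmStochastic A) (j : Fin n) : ∑ i, A i j = 1 := by
  simpa only [hA.symm j] using hA.sum_row j

end IsSymmStochastic

section Walks

variable {n : ℕ} {X : Type*} [PseudoMetricSpace X] {p : ℝ} {A : Matrix (Fin n) (Fin n) ℝ}

lemma edgeDistSum_self_le (hp : 1 ≤ p) (hA : IsSymmStochastic A) (x y : Fin n → X) :
    edgeDistSum p A x x ≤ 2 ^ (p - 1) * (edgeDistSum p A x y + diagDistSum p x y) := by
  calc edgeDistSum p A x x
      ≤ ∑ i, ∑ j, 2 ^ (p - 1) * (A i j * dist (x i) (y j) ^ p + A i j * dist (x j) (y j) ^ p) := by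
        refine sum_le_sum fun i _ => sum_le_sum fun j _ => ?_
        have h := mul_le_mul_of_nonneg_left
          (dist_rpow_le hp (x i) (y j) (x j)) (hA.nonneg i j)
        rw [dist_comm (y j)] at h
        linarith
    _ = 2 ^ (p - 1) * (edgeDistSum p A x y + diagDistSum p x y) := by
        simp only [← mul_sum, sum_add_distrib, edgeDistSum, diagDistSum]
        congr 2
        rw [sum_comm]
        simp only [← sum_mul, hA.sum_col, one_mul]

noncomputable def lazyWalk (A : Matrix (Fin n) (Fin n) ℝ) : Matrix (Fin n) (Fin n) ℝ :=
  (2⁻¹ : ℝ) • (A + 1)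

lemma IsSymmStochastic.lazyWalk (hA : IsSymmStochastic A) : IsSymmStochastic (lazyWalk A) := by
  refine ⟨fun i j => ?_, fun i j => ?_, fun i => ?_⟩
  · simp [_root_.lazyWalk, Matrix.one_apply, hA.symm i j, eq_comm]
  · have := hA.nonneg i j
    simp only [_root_.lazyWalk, Matrix.smul_apply, Matrix.add_apply, Matrix.one_apply]
    positivity
  · simp [_root_.lazyWalk, Matrix.one_apply, ← mul_sum, sum_add_distrib, hA.sum_row]
    norm_num

lemma edgeDistSum_lazyWalk (x y : Fin n → X) :
    edgeDistSum p (lazyWalk A) x y = (edgeDistSum p A x y + diagDistSum p x y) / 2 := by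
  simp [edgeDistSum, diagDistSum, lazyWalk, Matrix.one_apply, add_mul, sum_add_distrib,
    mul_assoc, ← mul_sum]
  ring

def bipartiteDouble (A : Matrix (Fin n) (Fin n) ℝ) : Matrix (Fin (n + n)) (Fin (n + n)) ℝ :=
  Matrix.reindex finSumFinEquiv finSumFinEquiv (Matrix.fromBlocks 0 A A 0)

lemma bipartiteDouble_castAdd_castAdd (i j : Fin n) :
    bipartiteDouble A (Fin.castAdd n i) (Fin.castAdd n j) = 0 := by
  simp only [bipartiteDouble, Matrix.reindex_apply, Matrix.submatrix_apply,
    finSumFinEquiv_symm_apply_castAdd, Matrix.fromBlocks_apply₁₁, Matrix.zero_apply]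

lemma bipartiteDouble_castAdd_natAdd (i j : Fin n) :
    bipartiteDouble A (Fin.castAdd n i) (Fin.natAdd n j) = A i j := by
  simp only [bipartiteDouble, Matrix.reindex_apply, Matrix.submatrix_apply,
    finSumFinEquiv_symm_apply_castAdd, finSumFinEquiv_symm_apply_natAdd,
    Matrix.fromBlocks_apply₁₂]

lemma bipartiteDouble_natAdd_castAdd (i j : Fin n) :
    bipartiteDouble A (Fin.natAdd n i) (Fin.castAdd n j) = A i j := by
  simp only [bipartiteDouble, Matrix.reindex_apply, Matrix.submatrix_apply,
    finSumFinEquiv_symm_apply_castAdd, finSumFinEquiv_symm_apply_natAdd,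
    Matrix.fromBlocks_apply₂₁]

lemma bipartiteDouble_natAdd_natAdd (i j : Fin n) :
    bipartiteDouble A (Fin.natAdd n i) (Fin.natAdd n j) = 0 := by
  simp only [bipartiteDouble, Matrix.reindex_apply, Matrix.submatrix_apply,
    finSumFinEquiv_symm_apply_natAdd, Matrix.fromBlocks_apply₂₂, Matrix.zero_apply]

lemma IsSymmStochastic.bipartiteDouble (hA : IsSymmStochastic A) :
    IsSymmStochastic (bipartiteDouble A) := by
  refine ⟨fun i j => ?_, fun i j => ?_, fun i => ?_⟩
  · induction i using Fin.addCases <;> induction j using Fin.addCases <;>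
      simp only [bipartiteDouble_castAdd_castAdd, bipartiteDouble_castAdd_natAdd,
        bipartiteDouble_natAdd_castAdd, bipartiteDouble_natAdd_natAdd, hA.symm]
  · induction i using Fin.addCases <;> induction j using Fin.addCases <;>
      simp only [bipartiteDouble_castAdd_castAdd, bipartiteDouble_castAdd_natAdd,
        bipartiteDouble_natAdd_castAdd, bipartiteDouble_natAdd_natAdd, hA.nonneg, le_refl]
  · induction i using Fin.addCases <;>
      simp only [Fin.sum_univ_add, bipartiteDouble_castAdd_castAdd,
        bipartiteDouble_castAdd_natAdd, bipartiteDouble_natAdd_castAdd,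
        bipartiteDouble_natAdd_natAdd, sum_const_zero, hA.sum_row, zero_add, add_zero]

lemma distSum_append (x y : Fin n → X) :
    distSum p (Fin.append x y) (Fin.append x y) =
      distSum p x x + distSum p x y + distSum p y x + distSum p y y := by
  simp only [distSum, Fin.sum_univ_add, Fin.append_left, Fin.append_right, sum_add_distrib]
  ring

lemma edgeDistSum_bipartiteDouble_append (x y : Fin n → X) :
    edgeDistSum p (bipartiteDouble A) (Fin.append x y) (Fin.append x y) =
      edgeDistSum p A x y + edgeDistSum p A y x := by
  simp only [edgeDistSum, Fin.sum_univ_add, bipartiteDouble_castAdd_castAdd,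
    bipartiteDouble_castAdd_natAdd, bipartiteDouble_natAdd_castAdd, bipartiteDouble_natAdd_natAdd,
    Fin.append_left, Fin.append_right, zero_mul, sum_const_zero, zero_add, add_zero]

end Walks

section PoincareBounds

variable {n : ℕ} {X : Type*} [PseudoMetricSpace X] {p G : ℝ} {A : Matrix (Fin n) (Fin n) ℝ}

-- `G` is an admissible constant in the inequality defining `gammaNL` (resp. `gammaPlusNL`),
-- with the denominators `n ^ 2` and `n` cleared.
def IsGammaBound (A : Matrix (Fin n) (Fin n) ℝ) (X : Type*) [PseudoMetricSpace X] (p G : ℝ) :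
    Prop :=
  ∀ x : Fin n → X, distSum p x x ≤ n * G * edgeDistSum p A x x

def IsGammaPlusBound (A : Matrix (Fin n) (Fin n) ℝ) (X : Type*) [PseudoMetricSpace X]
    (p G : ℝ) : Prop :=
  ∀ x y : Fin n → X, distSum p x y ≤ n * G * edgeDistSum p A x y

lemma IsGammaBound.dist_rpow_le_two_mul (h : IsGammaBound A X p G) (hp : p ≠ 0)
    (hA : IsSymmStochastic A) (hn : 2 ≤ n) (hG : 0 ≤ G) (a b : X) :
    dist a b ^ p ≤ 2 * G * dist a b ^ p := by
  set i₀ : Fin n := ⟨0, by omega⟩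
  set e : Fin n → ℝ := fun i => if i = i₀ then 1 else 0
  set x : Fin n → X := fun i => if i = i₀ then a else b
  set r := dist a b ^ p
  have hx : ∀ i j, dist (x i) (x j) ^ p = r * (e i + e j - 2 * (e i * e j)) := fun i j => by
    by_cases hi : i = i₀ <;> by_cases hj : j = i₀ <;>
      norm_num [x, e, r, hi, hj, dist_comm b a, Real.zero_rpow hp]
  have he : ∑ i, e i = 1 := by simp [e]
  have hS : distSum p x x = r * (2 * n - 2) := by
    simp only [distSum, hx, ← mul_sum, sum_add_distrib, sum_sub_distrib, sum_const, card_univ,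
      Fintype.card_fin, nsmul_eq_mul, he, mul_one]
    ring
  have hQ : edgeDistSum p A x x = r * (2 - 2 * A i₀ i₀) := by
    simp only [edgeDistSum, hx]
    simp only [mul_left_comm _ r, ← mul_sum, mul_sub, mul_add, sum_add_distrib, sum_sub_distrib]
    simp [e, mul_ite, hA.sum_row, hA.sum_col]
    ring
  have hcut := h x
  rw [hS, hQ] at hcut
  have hr : 0 ≤ r := by positivity
  have hn' : (2 : ℝ) ≤ n := by exact_mod_cast hn
  nlinarith [mul_nonneg (mul_nonneg hG hr) (hA.nonneg i₀ i₀)]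

end PoincareBounds

section PoincareTransfer

variable {n : ℕ} {X : Type*} [PseudoMetricSpace X] {p G : ℝ} {A : Matrix (Fin n) (Fin n) ℝ}

lemma isGammaPlusBound_of_isGammaBound_bipartiteDouble (hA : ∀ i j, A i j = A j i)
    (h : IsGammaBound (bipartiteDouble A) X p G) : IsGammaPlusBound A X p (2 * G) := by
  intro x y
  have hxy := h (Fin.append x y)
  rw [distSum_append, edgeDistSum_bipartiteDouble_append, distSum_comm y x,
    edgeDistSum_comm hA y x] at hxy
  push_cast at hxy
  linarith [distSum_nonneg (p := p) x x, distSum_nonneg (p := p) y y]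

lemma isGammaBound_bipartiteDouble_of_isGammaPlusBound (hp : 1 ≤ p) (hn : 0 < n)
    (hA : ∀ i j, A i j = A j i) (h : IsGammaPlusBound A X p G) :
    IsGammaBound (bipartiteDouble A) X p (2 ^ p * G) := by
  intro z
  rw [← Fin.append_castAdd_natAdd (f := z)]
  set x : Fin n → X := fun i => z (Fin.castAdd n i)
  set y : Fin n → X := fun i => z (Fin.natAdd n i)
  rw [distSum_append, edgeDistSum_bipartiteDouble_append, distSum_comm y x,
    edgeDistSum_comm hA y x]
  have hxx := distSum_self_le hp hn x y
  have hyy := distSum_self_le hp hn y x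
  rw [distSum_comm y x] at hyy
  have h2p : (1 : ℝ) ≤ 2 ^ p := Real.one_le_rpow one_le_two (by linarith)
  have hxy : distSum p x y ≤ 2 ^ p * distSum p x y :=
    le_mul_of_one_le_left (distSum_nonneg x y) h2p
  have hxy' := mul_le_mul_of_nonneg_left (h x y) (by positivity : (0 : ℝ) ≤ 2 ^ p)
  push_cast
  linarith

lemma isGammaBound_of_isGammaPlusBound_lazyWalk (hp : p ≠ 0)
    (h : IsGammaPlusBound (lazyWalk A) X p G) : IsGammaBound A X p (G / 2) := by
  intro x
  have hx := h x x
  rw [edgeDistSum_lazyWalk, diagDistSum_self hp, add_zero] at hx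
  linarith

lemma two_rpow_two_mul_add_one : (2 : ℝ) ^ (2 * p + 1) = 8 * (2 ^ (p - 1)) ^ 2 := by
  rw [show 2 * p + 1 = (p - 1) + (p - 1) + 3 by ring, Real.rpow_add two_pos,
    Real.rpow_add two_pos]
  norm_num
  ring

lemma isGammaPlusBound_lazyWalk_of_isGammaBound (hp : 1 ≤ p) (hA : IsSymmStochastic A)
    (hn : 2 ≤ n) (hG : 0 ≤ G) (h : IsGammaBound A X p G) :
    IsGammaPlusBound (lazyWalk A) X p (2 ^ (2 * p + 1) * G) := by
  intro x y
  set E : ℝ := 2 ^ (p - 1)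
  have hE : 1 ≤ E := Real.one_le_rpow one_le_two (by linarith)
  set D := diagDistSum p x y
  set T := edgeDistSum p A x y
  have hD0 : 0 ≤ D := diagDistSum_nonneg x y
  have hT0 : 0 ≤ T := edgeDistSum_nonneg hA.nonneg x y
  have hn0 : (0 : ℝ) ≤ n := n.cast_nonneg
  have hD : D ≤ 2 * G * D := by
    simp only [D, diagDistSum, mul_sum]
    exact sum_le_sum fun i _ => h.dist_rpow_le_two_mul (by linarith) hA hn hG _ _
  rw [edgeDistSum_lazyWalk, two_rpow_two_mul_add_one]
  calc distSum p x y ≤ E * (distSum p x x + n * D) := distSum_le_two_rpow_mul hp x y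
    _ ≤ E * (n * G * (E * (T + D)) + n * (2 * G * D)) := by
        gcongr
        exact (h x).trans (by gcongr; exact edgeDistSum_self_le hp hA x y)
    _ ≤ n * (8 * E ^ 2 * G) * ((T + D) / 2) := by
        have hnGD : 0 ≤ n * G * D := by positivity
        nlinarith [mul_nonneg (by nlinarith : (0 : ℝ) ≤ E ^ 2 - E) hnGD,
          mul_nonneg (mul_nonneg hn0 hG) (mul_nonneg (sq_nonneg E) hT0),
          mul_nonneg (sq_nonneg E) hnGD]

end PoincareTransfer

lemma ENNReal.le_ofReal_mul_sInf {T : Set ℝ≥0∞} {a : ℝ≥0∞} {c : ℝ} (hc : 0 < c)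
    (h : ∀ g ∈ T, g ≠ ∞ → a ≤ ENNReal.ofReal c * g) : a ≤ ENNReal.ofReal c * sInf T := by
  rw [sInf_eq_iInf', ENNReal.mul_iInf_of_ne (by simpa using hc) ENNReal.ofReal_ne_top]
  refine le_iInf fun ⟨g, hg⟩ => ?_
  rcases eq_or_ne g ∞ with rfl | hg'
  · simp [hc]
  · exact h g hg hg'

lemma sInf_le_of_Ioi_subset {α : Type*} [CompleteLinearOrder α] [DenselyOrdered α] {a : α}
    {T : Set α} (h : Set.Ioi a ⊆ T) : sInf T ≤ a :=
  le_of_forall_gt fun _ hc =>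
    let ⟨_, hab, hbc⟩ := exists_between hc
    (sInf_le (h hab)).trans_lt hbc

lemma ENNReal.ofReal_div_sq_le_iff {n : ℕ} (hn : 0 < n) {S G Q : ℝ} (hG : 0 ≤ G) (hQ : 0 ≤ Q) :
    ENNReal.ofReal (S / n ^ 2) ≤ ENNReal.ofReal G / n * ENNReal.ofReal Q ↔ S ≤ n * G * Q := by
  have hn' : (0 : ℝ) < n := by exact_mod_cast hn
  rw [← ENNReal.ofReal_natCast, ← ENNReal.ofReal_div_of_pos hn',
    ← ENNReal.ofReal_mul (div_nonneg hG hn'.le), ENNReal.ofReal_le_ofReal_iff (by positivity),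
    div_le_iff₀ (by positivity), show G / n * Q * n ^ 2 = n * G * Q by field_simp]

section GammaBounds

variable {n : ℕ} {X : Type*} [PseudoMetricSpace X] {p G : ℝ} {A : Matrix (Fin n) (Fin n) ℝ}

lemma gammaNL_le_ofReal (hn : 0 < n) (hA : ∀ i j, 0 ≤ A i j) (hG : 0 < G)
    (h : IsGammaBound A X p G) : gammaNL A X p ≤ ENNReal.ofReal G :=
  sInf_le ⟨ENNReal.ofReal_pos.2 hG, fun x =>
    (ENNReal.ofReal_div_sq_le_iff hn hG.le (edgeDistSum_nonneg hA x x)).2 (h x)⟩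

lemma gammaPlusNL_le_ofReal (hn : 0 < n) (hA : ∀ i j, 0 ≤ A i j) (hG : 0 < G)
    (h : IsGammaPlusBound A X p G) : gammaPlusNL A X p ≤ ENNReal.ofReal G :=
  sInf_le ⟨ENNReal.ofReal_pos.2 hG, fun x y =>
    (ENNReal.ofReal_div_sq_le_iff hn hG.le (edgeDistSum_nonneg hA x y)).2 (h x y)⟩

lemma le_ofReal_mul_gammaNL (hn : 0 < n) (hA : ∀ i j, 0 ≤ A i j) {a : ℝ≥0∞} {c : ℝ}
    (hc : 0 < c) (h : ∀ G, 0 < G → IsGammaBound A X p G → a ≤ ENNReal.ofReal (c * G)) :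
    a ≤ ENNReal.ofReal c * gammaNL A X p :=
  ENNReal.le_ofReal_mul_sInf hc fun g ⟨hg0, hg⟩ hg' => by
    have hG := ENNReal.toReal_pos hg0.ne' hg'
    have hbound : IsGammaBound A X p g.toReal := fun x =>
      (ENNReal.ofReal_div_sq_le_iff hn hG.le (edgeDistSum_nonneg hA x x)).1
        (by rw [ENNReal.ofReal_toReal hg']; exact hg x)
    simpa [ENNReal.ofReal_mul hc.le, ENNReal.ofReal_toReal hg'] using h _ hG hbound

lemma le_ofReal_mul_gammaPlusNL (hn : 0 < n) (hA : ∀ i j, 0 ≤ A i j) {a : ℝ≥0∞} {c : ℝ}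
    (hc : 0 < c) (h : ∀ G, 0 < G → IsGammaPlusBound A X p G → a ≤ ENNReal.ofReal (c * G)) :
    a ≤ ENNReal.ofReal c * gammaPlusNL A X p :=
  ENNReal.le_ofReal_mul_sInf hc fun g ⟨hg0, hg⟩ hg' => by
    have hG := ENNReal.toReal_pos hg0.ne' hg'
    have hbound : IsGammaPlusBound A X p g.toReal := fun x y =>
      (ENNReal.ofReal_div_sq_le_iff hn hG.le (edgeDistSum_nonneg hA x y)).1
        (by rw [ENNReal.ofReal_toReal hg']; exact hg x y)
    simpa [ENNReal.ofReal_mul hc.le, ENNReal.ofReal_toReal hg'] using h _ hG hbound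

lemma gammaPlusNL_fin_zero (A : Matrix (Fin 0) (Fin 0) ℝ) : gammaPlusNL A X p = 0 :=
  nonpos_iff_eq_zero.1 <| sInf_le_of_Ioi_subset fun _ hg => ⟨hg, fun x y => by simp⟩

lemma gammaNL_eq_zero_of_le_one (hp : p ≠ 0) (hn : n ≤ 1) : gammaNL A X p = 0 :=
  nonpos_iff_eq_zero.1 <| sInf_le_of_Ioi_subset fun _ hg => ⟨hg, fun x => by
    interval_cases n <;> simp [Real.zero_rpow hp]⟩

lemma gammaPlusNL_le_two_mul_gammaNL_bipartiteDouble (hn : 0 < n) (hA : IsSymmStochastic A) :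
    gammaPlusNL A X p ≤ 2 * gammaNL (bipartiteDouble A) X p := by
  simpa using le_ofReal_mul_gammaNL (by omega) hA.bipartiteDouble.nonneg two_pos
    fun G hG hbound => gammaPlusNL_le_ofReal hn hA.nonneg (by positivity)
      (isGammaPlusBound_of_isGammaBound_bipartiteDouble hA.symm hbound)

lemma gammaNL_bipartiteDouble_le_two_rpow_mul_gammaPlusNL (hp : 1 ≤ p) (hn : 0 < n)
    (hA : IsSymmStochastic A) :
    gammaNL (bipartiteDouble A) X p ≤ 2 ^ p * gammaPlusNL A X p := by
  have h := le_ofReal_mul_gammaPlusNL (X := X) hn hA.nonneg (by positivity : (0 : ℝ) < 2 ^ p)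
    fun G hG hbound => gammaNL_le_ofReal (by omega) hA.bipartiteDouble.nonneg (by positivity)
      (isGammaBound_bipartiteDouble_of_isGammaPlusBound hp hn hA.symm hbound)
  rwa [← ENNReal.ofReal_rpow_of_pos two_pos, ENNReal.ofReal_ofNat] at h

lemma gammaNL_le_gammaPlusNL_lazyWalk_div_two (hp : p ≠ 0) (hn : 0 < n)
    (hA : IsSymmStochastic A) : gammaNL A X p ≤ gammaPlusNL (lazyWalk A) X p / 2 := by
  have h := le_ofReal_mul_gammaPlusNL (X := X) hn hA.lazyWalk.nonneg (inv_pos.2 two_pos)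
    fun G hG hbound => gammaNL_le_ofReal hn hA.nonneg (by positivity)
      (by simpa [div_eq_inv_mul] using isGammaBound_of_isGammaPlusBound_lazyWalk hp hbound)
  rwa [ENNReal.ofReal_inv_of_pos two_pos, ENNReal.ofReal_ofNat, ← ENNReal.div_eq_inv_mul] at h

lemma gammaPlusNL_lazyWalk_le_two_rpow_mul_gammaNL (hp : 1 ≤ p) (hn : 2 ≤ n)
    (hA : IsSymmStochastic A) :
    gammaPlusNL (lazyWalk A) X p ≤ 2 ^ (2 * p + 1) * gammaNL A X p := by
  have h := le_ofReal_mul_gammaNL (X := X) (by omega) hA.nonneg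
    (by positivity : (0 : ℝ) < 2 ^ (2 * p + 1))
    fun G hG hbound => gammaPlusNL_le_ofReal (by omega) hA.lazyWalk.nonneg (by positivity)
      (isGammaPlusBound_lazyWalk_of_isGammaBound hp hA hn hG.le hbound)
  rwa [← ENNReal.ofReal_rpow_of_pos two_pos, ENNReal.ofReal_ofNat] at h

end GammaBounds

theorem gamma_gammaPlus_comparison (p : ℝ) (hp : 1 ≤ p)
    (X Y : Type*) [MetricSpace X] [MetricSpace Y] :
    (∀ Ψ : ℝ≥0∞ → ℝ≥0∞, Monotone Ψ →
      (∀ (n : ℕ) (A : Matrix (Fin n) (Fin n) ℝ), IsSymmStochastic A →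
        gammaNL A X p ≤ Ψ (gammaNL A Y p)) →
      ∀ (n : ℕ) (A : Matrix (Fin n) (Fin n) ℝ), IsSymmStochastic A →
        gammaPlusNL A X p ≤ 2 * Ψ ((2 : ℝ≥0∞) ^ p * gammaPlusNL A Y p)) ∧
    (∀ Φ : ℝ≥0∞ → ℝ≥0∞, Monotone Φ →
      (∀ (n : ℕ) (A : Matrix (Fin n) (Fin n) ℝ), IsSymmStochastic A →
        gammaPlusNL A X p ≤ Φ (gammaPlusNL A Y p)) →
      ∀ (n : ℕ) (A : Matrix (Fin n) (Fin n) ℝ), IsSymmStochastic A →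
        gammaNL A X p ≤ Φ ((2 : ℝ≥0∞) ^ (2 * p + 1) * gammaNL A Y p) / 2) := by
  have hp0 : p ≠ 0 := by linarith
  refine ⟨fun Ψ hΨ hXY n A hA => ?_, fun Φ hΦ hXY n A hA => ?_⟩
  · rcases n.eq_zero_or_pos with rfl | hn
    · simp [gammaPlusNL_fin_zero]
    calc gammaPlusNL A X p ≤ 2 * gammaNL (bipartiteDouble A) X p :=
          gammaPlusNL_le_two_mul_gammaNL_bipartiteDouble hn hA
      _ ≤ 2 * Ψ (gammaNL (bipartiteDouble A) Y p) := by gcongr; exact hXY _ _ hA.bipartiteDouble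
      _ ≤ 2 * Ψ (2 ^ p * gammaPlusNL A Y p) := by
          gcongr
          exact hΨ (gammaNL_bipartiteDouble_le_two_rpow_mul_gammaPlusNL hp hn hA)
  · rcases le_or_gt n 1 with hn | hn
    · simp [gammaNL_eq_zero_of_le_one hp0 hn]
    calc gammaNL A X p ≤ gammaPlusNL (lazyWalk A) X p / 2 :=
          gammaNL_le_gammaPlusNL_lazyWalk_div_two hp0 (by omega) hA
      _ ≤ Φ (gammaPlusNL (lazyWalk A) Y p) / 2 := by gcongr; exact hXY _ _ hA.lazyWalk
      _ ≤ Φ (2 ^ (2 * p + 1) * gammaNL A Y p) / 2 := by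
          gcongr
          exact hΦ (gammaPlusNL_lazyWalk_le_two_rpow_mul_gammaNL hp hn hA)
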